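/- Let d ≥ 1 and λ ∈ ℂ with Im λ ≠ 0. The only tempered distribution u on ℝ^{1+d} satisfying □u = λu in the sense of distributions is u = 0. -/

import Mathlib

open MeasureTheory SchwartzMap Complex
open scoped SchwartzMap

abbrev Spacetime (d : ℕ) := EuclideanSpace ℝ (Fin (d + 1))

/-- The d'Alembertian `□f = ∂_t² f − Σ_{j=1}^d ∂_{x_j}² f` as a continuous linear operator
on the Schwartz space `𝓢(ℝ^{1+d}, ℂ)`. -/
noncomputable def dAlembertian (d : ℕ) :
    𝓢(Spacetime d, ℂ) →L[ℂ] 𝓢(Spacetime d, ℂ) :=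
  (LineDeriv.lineDerivOpCLM ℂ 𝓢(Spacetime d, ℂ) (EuclideanSpace.single 0 1 : Spacetime d)).comp
      (LineDeriv.lineDerivOpCLM ℂ 𝓢(Spacetime d, ℂ) (EuclideanSpace.single 0 1 : Spacetime d))
    - ∑ j : Fin d,
      (LineDeriv.lineDerivOpCLM ℂ 𝓢(Spacetime d, ℂ) (EuclideanSpace.single j.succ 1 : Spacetime d)).comp
        (LineDeriv.lineDerivOpCLM ℂ 𝓢(Spacetime d, ℂ) (EuclideanSpace.single j.succ 1 : Spacetime d))

/-!
On the Fourier side `□` is multiplication by the real symbol `σ(ξ) = 4π²(|ξ'|² - ξ₀²)`. For `Im λ ≠ 0`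
the function `σ - λ` stays at distance `|Im λ|` from `0`, so `1 / (σ - λ)` is a multiplier of
temperate growth and the corresponding Fourier multiplier is a right inverse of `□ - λ` on `𝓢`.
Hence every Schwartz function is of the form `□φ - λφ`, on which `u` vanishes.
-/

open FourierTransform LineDeriv Real
open scoped RealInnerProductSpace

section TemperateGrowth

open Nat

variable {𝕜 E : Type*} [NontriviallyNormedField 𝕜] [NormedAlgebra ℝ 𝕜]
  [NormedAddCommGroup E] [NormedSpace ℝ E]

theorem norm_iteratedFDeriv_real_inv (n : ℕ) {z : 𝕜} (hz : z ≠ 0) :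
    ‖iteratedFDeriv ℝ n (Inv.inv : 𝕜 → 𝕜) z‖ = n ! * ‖z‖⁻¹ ^ (n + 1) := by
  have hinv : ContDiffAt 𝕜 n (Inv.inv : 𝕜 → 𝕜) z := contDiffAt_inv 𝕜 hz
  rw [← hinv.restrictScalars_iteratedFDeriv (𝕜 := ℝ), Function.comp_apply,
    ContinuousMultilinearMap.norm_restrictScalars, norm_iteratedFDeriv_eq_norm_iteratedDeriv,
    iteratedDeriv_eq_iterate, iter_deriv_inv, norm_mul, norm_mul, norm_pow, norm_neg, norm_one,
    one_pow, one_mul, ← map_natCast (algebraMap ℝ 𝕜), norm_algebraMap', norm_zpow]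
  simp [← zpow_natCast, Int.sub_eq_add_neg, add_comm]

theorem Function.HasTemperateGrowth.inv {f : E → 𝕜} (hf : f.HasTemperateGrowth) {δ : ℝ}
    (hδ : 0 < δ) (hfδ : ∀ x, δ ≤ ‖f x‖) : (fun x ↦ (f x)⁻¹).HasTemperateGrowth := by
  -- an open neighbourhood of the range of `f` on which every derivative of `z ↦ z⁻¹` is bounded
  set t : Set 𝕜 := {z | δ / 2 < ‖z‖}
  have ht : IsOpen t := isOpen_lt continuous_const continuous_norm
  have ht0 : ∀ z ∈ t, z ≠ 0 := fun z hz h0 ↦ by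
    simp only [t, Set.mem_ofPred_eq, h0, norm_zero] at hz
    linarith
  refine hf.comp' (g := Inv.inv) (t := t) ?_ ht.uniqueDiffOn
    (fun z hz ↦ ((contDiffAt_inv 𝕜 (ht0 z hz)).restrict_scalars ℝ).contDiffWithinAt) ?_
  · rintro _ ⟨x, rfl⟩
    exact (half_lt_self hδ).trans_le (hfδ x)
  intro N
  refine ⟨0, ∑ n ∈ Finset.range (N + 1), n ! * (2 / δ) ^ (n + 1), by positivity,
    fun n hn z hz ↦ ?_⟩
  rw [iteratedFDerivWithin_of_isOpen n ht hz, norm_iteratedFDeriv_real_inv n (ht0 z hz),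
    pow_zero, mul_one]
  have hz_inv : ‖z‖⁻¹ ≤ 2 / δ := by
    rw [← inv_div]
    exact inv_anti₀ (by positivity) hz.le
  calc (n ! : ℝ) * ‖z‖⁻¹ ^ (n + 1) ≤ n ! * (2 / δ) ^ (n + 1) := by gcongr
    _ ≤ _ := Finset.single_le_sum (f := fun n ↦ (n ! : ℝ) * (2 / δ) ^ (n + 1))
        (fun _ _ ↦ by positivity) (Finset.mem_range_succ_iff.2 hn)

end TemperateGrowth

section FourierSymbol

variable {V : Type*} [NormedAddCommGroup V] [InnerProductSpace ℝ V] [FiniteDimensional ℝ V]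
  [MeasurableSpace V] [BorelSpace V]

theorem SchwartzMap.fourier_lineDerivOp_lineDerivOp_apply {F : Type*} [NormedAddCommGroup F]
    [NormedSpace ℂ F] (f : 𝓢(V, F)) (m ξ : V) :
    𝓕 (∂_{m} (∂_{m} f)) ξ = (-(2 * π) ^ 2 * ⟪ξ, m⟫ ^ 2) • 𝓕 f ξ := by
  have : (inner ℝ · m).HasTemperateGrowth := by fun_prop
  simp only [fourier_lineDerivOp_eq, smul_apply, smulLeftCLM_apply_apply this, ← coe_smul,
    smul_smul]
  congr 1
  push_cast
  linear_combination (4 * π ^ 2 * ⟪ξ, m⟫ ^ 2 : ℂ) * I_sq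

theorem SchwartzMap.sub_smul_surjective_of_fourier_eq_mul (P : 𝓢(V, ℂ) → 𝓢(V, ℂ))
    {σ : V → ℝ} (hσ : σ.HasTemperateGrowth) (hP : ∀ φ ξ, 𝓕 (P φ) ξ = σ ξ * 𝓕 φ ξ) {lam : ℂ}
    (hlam : lam.im ≠ 0) : Function.Surjective fun φ ↦ P φ - lam • φ := by
  intro ψ
  set w : V → ℂ := fun ξ ↦ σ ξ - lam
  have hw : w.HasTemperateGrowth := by
    have := ofRealCLM.hasTemperateGrowth.comp hσ
    fun_prop
  have hw_ne : ∀ ξ, w ξ ≠ 0 := fun ξ h ↦ hlam (by simpa [w] using congrArg im h)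
  have hw_ge : ∀ ξ, |lam.im| ≤ ‖w ξ‖ := fun ξ ↦ by simpa [w] using abs_im_le_norm (w ξ)
  have hw_inv := hw.inv (abs_pos.2 hlam) hw_ge
  refine ⟨fourierMultiplierCLM ℂ (fun ξ ↦ (w ξ)⁻¹) ψ, ?_⟩
  apply (fourierEquiv ℂ 𝓢(V, ℂ)).injective
  ext ξ
  simp only [fourierEquiv_apply, sub_eq_add_neg, FourierTransform.fourier_add, ← neg_smul,
    FourierTransform.fourier_smul, add_apply, smul_apply, hP, fourierMultiplierCLM_apply,
    fourier_fourierInv_eq, smulLeftCLM_apply_apply hw_inv]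
  have hw_mul_inv : ((σ ξ : ℂ) - lam) * ((σ ξ : ℂ) - lam)⁻¹ = 1 := mul_inv_cancel₀ (hw_ne ξ)
  simp only [smul_eq_mul, w]
  linear_combination 𝓕 ψ ξ * hw_mul_inv

end FourierSymbol

noncomputable def dAlembertianSymbol (d : ℕ) (ξ : Spacetime d) : ℝ :=
  (2 * π) ^ 2 * (∑ j : Fin d, ξ j.succ ^ 2 - ξ 0 ^ 2)

theorem hasTemperateGrowth_dAlembertianSymbol (d : ℕ) :
    (dAlembertianSymbol d).HasTemperateGrowth := by
  have : ∀ i, (fun ξ : Spacetime d ↦ ξ i).HasTemperateGrowth :=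
    fun i ↦ (EuclideanSpace.proj i).hasTemperateGrowth
  unfold dAlembertianSymbol
  fun_prop

theorem fourier_dAlembertian_apply {d : ℕ} (φ : 𝓢(Spacetime d, ℂ)) (ξ : Spacetime d) :
    𝓕 (dAlembertian d φ) ξ = dAlembertianSymbol d ξ * 𝓕 φ ξ := by
  simp only [dAlembertian, sub_eq_add_neg, add_apply, neg_apply, sum_apply,
    ContinuousLinearMap.comp_apply, lineDerivOpCLM_apply, FourierTransform.fourier_add,
    FourierTransform.fourier_neg, FourierTransform.fourier_sum,
    fourier_lineDerivOp_lineDerivOp_apply, EuclideanSpace.inner_single_right]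
  rw [← Finset.sum_smul, ← neg_smul, ← add_smul, real_smul, dAlembertianSymbol, mul_sub,
    Finset.mul_sum]
  simp only [one_mul, conj_trivial, neg_mul, Finset.sum_neg_distrib, neg_neg]
  congr 2
  ring

theorem no_tempered_eigendistributions_general (d : ℕ)
    (lam : ℂ) (hlam : lam.im ≠ 0)
    (u : 𝓢(Spacetime d, ℂ) →L[ℂ] ℂ)
    (hu : ∀ φ : 𝓢(Spacetime d, ℂ), u (dAlembertian d φ) = lam * u φ) :
    u = 0 := by
  ext ψ
  obtain ⟨φ, rfl⟩ := SchwartzMap.sub_smul_surjective_of_fourier_eq_mul (dAlembertian d)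
    (hasTemperateGrowth_dAlembertianSymbol d) fourier_dAlembertian_apply hlam ψ
  simp [hu]

/-- If `Im λ ≠ 0`, the only tempered distribution `u` on `ℝ^{1+d}` with `□u = λu`
(in the sense of distributions) is `u = 0`. -/
theorem no_tempered_eigendistributions (d : ℕ) (hd : 1 ≤ d)
    (lam : ℂ) (hlam : lam.im ≠ 0)
    (u : 𝓢(Spacetime d, ℂ) →L[ℂ] ℂ)
    (hu : ∀ φ : 𝓢(Spacetime d, ℂ), u (dAlembertian d φ) = lam * u φ) :
    u = 0 :=
  no_tempered_eigendistributions_general d lam hlam u hu
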